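/- arXiv:2504.11926 — 5 statements merged into one kernel-verified Lean document; each statement's English description precedes it below -/
import Mathlib

section
/- Let α, β > 0, let A be an m×m complex Hermitian matrix with A ≽ αI and B an n×n complex Hermitian matrix with B ≽ βI. Then for every m×n complex matrix Y the Sylvester equation A X + X B = Y has a unique solution X, and this solution satisfies the operator-norm bound ‖X‖ ≤ ‖Y‖ / (α + β). -/
/-! Let `σ = ‖X‖` be attained at a unit vector `v`. Maximality forces `X† X v = σ² v`, so testing
`Y = A X + X B` against the pair `(X v, v)` gives
`Re ⟪X v, Y v⟫ = Re ⟪X v, A (X v)⟫ + σ² Re ⟪v, B v⟫ ≥ (α + β) σ²`,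
while `Re ⟪X v, Y v⟫ ≤ σ ‖Y‖`. Hence `σ ≤ ‖Y‖ / (α + β)`; in particular `X ↦ A X + X B` is an
injective, hence bijective, linear endomorphism of the finite-dimensional space of matrices. -/

open MeasureTheory

/-- The ℓ²-operator norm of a (possibly rectangular) complex matrix, i.e. the operator norm
of the associated linear map between the corresponding Euclidean spaces. -/
noncomputable def l2OpNorm {m n : ℕ} (A : Matrix (Fin m) (Fin n) ℂ) : ℝ :=
  ‖LinearMap.toContinuousLinearMap (Matrix.toEuclideanLin A)‖

namespace ContinuousLinearMap

variable {𝕜 E F : Type*} [RCLike 𝕜]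

theorem exists_norm_eq_one_and_norm_apply_eq_opNorm [NormedAddCommGroup E] [NormedSpace 𝕜 E]
    [ProperSpace E] [Nontrivial E] [SeminormedAddCommGroup F] [NormedSpace 𝕜 F]
    (T : E →L[𝕜] F) : ∃ v : E, ‖v‖ = 1 ∧ ‖T v‖ = ‖T‖ := by
  obtain ⟨v, hv, hmax⟩ := (isCompact_sphere (0 : E) 1).exists_isMaxOn
    (Set.nonempty_coe_sort.mp (NormedSpace.sphere_nonempty_rclike 𝕜 zero_le_one))
    T.continuous.norm.continuousOn
  rw [mem_sphere_zero_iff_norm] at hv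
  refine ⟨v, hv, le_antisymm (by simpa [hv] using T.le_opNorm v) ?_⟩
  refine T.opNorm_le_bound (norm_nonneg _) fun w => ?_
  rcases eq_or_ne w 0 with rfl | hw
  · simp
  have hmax_w : ‖T ((‖w‖⁻¹ : 𝕜) • w)‖ ≤ ‖T v‖ :=
    hmax (mem_sphere_zero_iff_norm.mpr (norm_smul_inv_norm hw))
  rw [map_smul, norm_smul, norm_inv, RCLike.norm_ofReal, abs_norm,
    inv_mul_le_iff₀ (norm_pos_iff.mpr hw)] at hmax_w
  linarith [mul_comm ‖w‖ ‖T v‖]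

variable [NormedAddCommGroup E] [InnerProductSpace 𝕜 E] [NormedAddCommGroup F]
  [InnerProductSpace 𝕜 F]

open scoped InnerProductSpace

theorem adjoint_apply_apply_eq_of_norm_apply_eq [CompleteSpace E] [CompleteSpace F]
    (T : E →L[𝕜] F) {v : E} (hv : ‖T v‖ = ‖T‖ * ‖v‖) :
    adjoint T (T v) = ((‖T‖ ^ 2 : ℝ) : 𝕜) • v := by
  have h_adj : ‖adjoint T (T v)‖ ≤ ‖T‖ * ‖T v‖ := by
    simpa only [LinearIsometryEquiv.norm_map] using (adjoint (𝕜 := 𝕜) T).le_opNorm (T v)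
  have h_inner :
      RCLike.re ⟪adjoint T (T v), ((‖T‖ ^ 2 : ℝ) : 𝕜) • v⟫_𝕜 = ‖T‖ ^ 2 * ‖T v‖ ^ 2 := by
    rw [inner_smul_real_right, adjoint_inner_left, inner_self_eq_norm_sq_to_K, RCLike.smul_re]
    norm_cast
  have h_smul : ‖((‖T‖ ^ 2 : ℝ) : 𝕜) • v‖ = ‖T‖ ^ 2 * ‖v‖ := by
    rw [norm_smul, RCLike.norm_ofReal, abs_of_nonneg (by positivity)]
  -- Expanding the square, `‖T† T v‖ ≤ ‖T‖ ‖T v‖` and `‖T v‖ = ‖T‖ ‖v‖` make it nonpositive.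
  have h_sq : ‖adjoint T (T v) - ((‖T‖ ^ 2 : ℝ) : 𝕜) • v‖ ^ 2 ≤ 0 := by
    rw [norm_sub_sq (𝕜 := 𝕜), h_inner, h_smul, hv]
    rw [hv] at h_adj
    nlinarith [norm_nonneg (adjoint T (T v)), norm_nonneg T, norm_nonneg v]
  rw [← sub_eq_zero, ← norm_eq_zero]
  exact (sq_nonpos_iff _).mp h_sq

theorem opNorm_le_opNorm_sylvester_div [ProperSpace E] [CompleteSpace F]
    (A : F →L[𝕜] F) (B : E →L[𝕜] E) {α β : ℝ} (hαβ : 0 < α + β)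
    (hA : ∀ u, α * ‖u‖ ^ 2 ≤ RCLike.re ⟪u, A u⟫_𝕜)
    (hB : ∀ u, β * ‖u‖ ^ 2 ≤ RCLike.re ⟪u, B u⟫_𝕜)
    (X : E →L[𝕜] F) : ‖X‖ ≤ ‖A ∘L X + X ∘L B‖ / (α + β) := by
  rcases subsingleton_or_nontrivial E with hE | hE
  · simp [Subsingleton.elim X 0]
  obtain ⟨v, hv, hXv⟩ := X.exists_norm_eq_one_and_norm_apply_eq_opNorm
  have h_eig := X.adjoint_apply_apply_eq_of_norm_apply_eq (v := v) (by rw [hXv, hv, mul_one])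
  set Y := A ∘L X + X ∘L B
  have h_lower : (α + β) * ‖X‖ ^ 2 ≤ RCLike.re ⟪X v, Y v⟫_𝕜 := by
    have h_split : ⟪X v, Y v⟫_𝕜 = ⟪X v, A (X v)⟫_𝕜 + ((‖X‖ ^ 2 : ℝ) : 𝕜) * ⟪v, B v⟫_𝕜 := by
      rw [add_apply, comp_apply, comp_apply, inner_add_right, ← adjoint_inner_left X, h_eig,
        inner_smul_left, RCLike.conj_ofReal]
    rw [h_split, map_add, RCLike.re_ofReal_mul]
    have hAXv := hA (X v)
    have hBv := hB v
    rw [hXv] at hAXv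
    rw [hv] at hBv
    nlinarith
  have h_upper : RCLike.re ⟪X v, Y v⟫_𝕜 ≤ ‖X‖ * ‖Y‖ := calc
    _ ≤ ‖X v‖ * ‖Y v‖ := re_inner_le_norm _ _
    _ ≤ ‖X‖ * ‖Y‖ := by rw [hXv]; gcongr; simpa [hv] using Y.le_opNorm v
  rw [le_div_iff₀ hαβ]
  rcases (norm_nonneg X).eq_or_lt with h0 | hpos
  · simp [← h0]
  · nlinarith

end ContinuousLinearMap

namespace Matrix

variable {R m n : Type*} [CommSemiring R] [Fintype m] [Fintype n]

def sylvesterMap (A : Matrix m m R) (B : Matrix n n R) : Matrix m n R →ₗ[R] Matrix m n R :=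
  mulLeftLinearMap n R A + mulRightLinearMap m R B

@[simp]
theorem sylvesterMap_apply (A : Matrix m m R) (B : Matrix n n R) (X : Matrix m n R) :
    sylvesterMap A B X = A * X + X * B :=
  rfl

end Matrix

open Matrix

theorem l2OpNorm_eq_zero_iff {m n : ℕ} {X : Matrix (Fin m) (Fin n) ℂ} :
    l2OpNorm X = 0 ↔ X = 0 := by
  simp [l2OpNorm]

theorem l2OpNorm_le_l2OpNorm_sylvester_div {m n : ℕ} {α β : ℝ} (hαβ : 0 < α + β)
    {A : Matrix (Fin m) (Fin m) ℂ} {B : Matrix (Fin n) (Fin n) ℂ}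
    (hA : ∀ u : EuclideanSpace ℂ (Fin m), α * ‖u‖ ^ 2 ≤ (inner ℂ u (toEuclideanLin A u)).re)
    (hB : ∀ u : EuclideanSpace ℂ (Fin n), β * ‖u‖ ^ 2 ≤ (inner ℂ u (toEuclideanLin B u)).re)
    (X : Matrix (Fin m) (Fin n) ℂ) : l2OpNorm X ≤ l2OpNorm (A * X + X * B) / (α + β) := by
  have h_sylvester : LinearMap.toContinuousLinearMap (toEuclideanLin (A * X + X * B)) =
      LinearMap.toContinuousLinearMap (toEuclideanLin A) ∘L
          LinearMap.toContinuousLinearMap (toEuclideanLin X) +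
        LinearMap.toContinuousLinearMap (toEuclideanLin X) ∘L
          LinearMap.toContinuousLinearMap (toEuclideanLin B) := by
    ext1 v
    simp
  rw [l2OpNorm, l2OpNorm, h_sylvester]
  exact ContinuousLinearMap.opNorm_le_opNorm_sylvester_div _ _ hαβ hA hB _

theorem sylvester_existsUnique_norm_bound_general {m n : ℕ} (α β : ℝ) (hα : 0 < α) (hβ : 0 < β)
    (A : Matrix (Fin m) (Fin m) ℂ) (B : Matrix (Fin n) (Fin n) ℂ)
    (hAα : ∀ u : EuclideanSpace ℂ (Fin m),
      α * ‖u‖ ^ 2 ≤ ((inner ℂ u (Matrix.toEuclideanLin A u) : ℂ)).re)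
    (hBβ : ∀ u : EuclideanSpace ℂ (Fin n),
      β * ‖u‖ ^ 2 ≤ ((inner ℂ u (Matrix.toEuclideanLin B u) : ℂ)).re)
    (Y : Matrix (Fin m) (Fin n) ℂ) :
    (∃! X : Matrix (Fin m) (Fin n) ℂ, A * X + X * B = Y) ∧
    ∀ X : Matrix (Fin m) (Fin n) ℂ, A * X + X * B = Y → l2OpNorm X ≤ l2OpNorm Y / (α + β) := by
  have bound := l2OpNorm_le_l2OpNorm_sylvester_div (add_pos hα hβ) hAα hBβ
  have h_inj : Function.Injective (sylvesterMap A B) := by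
    refine (injective_iff_map_eq_zero _).mpr fun X hX => l2OpNorm_eq_zero_iff.mp ?_
    have hX_le := bound X
    rw [← sylvesterMap_apply, hX, l2OpNorm_eq_zero_iff.mpr rfl, zero_div] at hX_le
    exact hX_le.antisymm (norm_nonneg _)
  have h_bij : Function.Bijective (sylvesterMap A B) :=
    ⟨h_inj, LinearMap.injective_iff_surjective.mp h_inj⟩
  exact ⟨h_bij.existsUnique Y, fun X hX => hX ▸ bound X⟩

/-- **Unique solvability of the Sylvester equation with a norm bound.**
If `A` is Hermitian with `A ≽ αI`, `B` is Hermitian with `B ≽ βI`, and `α, β > 0`, then for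
every matrix `Y` the Sylvester equation `A X + X B = Y` has a unique solution `X`, and any
solution satisfies `‖X‖ ≤ ‖Y‖ / (α + β)` in the ℓ²-operator norm. -/
theorem sylvester_existsUnique_norm_bound {m n : ℕ} (α β : ℝ) (hα : 0 < α) (hβ : 0 < β)
    (A : Matrix (Fin m) (Fin m) ℂ) (B : Matrix (Fin n) (Fin n) ℂ)
    (hA : A.IsHermitian) (hB : B.IsHermitian)
    (hAα : ∀ u : EuclideanSpace ℂ (Fin m),
      α * ‖u‖ ^ 2 ≤ ((inner ℂ u (Matrix.toEuclideanLin A u) : ℂ)).re)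
    (hBβ : ∀ u : EuclideanSpace ℂ (Fin n),
      β * ‖u‖ ^ 2 ≤ ((inner ℂ u (Matrix.toEuclideanLin B u) : ℂ)).re)
    (Y : Matrix (Fin m) (Fin n) ℂ) :
    (∃! X : Matrix (Fin m) (Fin n) ℂ, A * X + X * B = Y) ∧
    ∀ X : Matrix (Fin m) (Fin n) ℂ, A * X + X * B = Y → l2OpNorm X ≤ l2OpNorm Y / (α + β) :=
  sylvester_existsUnique_norm_bound_general α β hα hβ A B hAα hBβ Y
end

section
/- Let α, β > 0 and let A, B be n×n complex Hermitian positive definite matrices with A ≽ α²I and B ≽ β²I. Then the square-root perturbation bound ‖A^{1/2} − B^{1/2}‖ ≤ ‖A − B‖ / (α + β) holds in the ℓ²-operator norm. -/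
open MeasureTheory
open scoped ComplexOrder

/-- Real powers of a Hermitian matrix, defined spectrally via the continuous functional
calculus; for a positive definite matrix, `herPow A hA (1/2)` is its unique Hermitian positive
definite square root. -/
noncomputable def herPow {N : ℕ} (A : Matrix (Fin N) (Fin N) ℂ) (hA : A.IsHermitian) (r : ℝ) :
    Matrix (Fin N) (Fin N) ℂ :=
  hA.cfc (fun x : ℝ => x ^ r)

/-! With `S = √A`, `T = √B` and `X = S - T` one has `A - B = S X + X T`. For a unit eigenvector
`v` of the Hermitian matrix `X`, with eigenvalue `ν`, this gives
`⟪v, (A - B) v⟫ = ν (⟪v, S v⟫ + ⟪v, T v⟫)`. Operator monotonicity of the square root turns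
`A ≥ α²` and `B ≥ β²` into `S ≥ α` and `T ≥ β`, so `|ν| (α + β) ≤ ‖A - B‖`; and `‖X‖` is the
largest such `|ν|`. -/

open scoped Matrix.Norms.L2Operator MatrixOrder InnerProductSpace
open RCLike

theorem CFC.algebraMap_le_sqrt {A : Type*} [CStarAlgebra A] [PartialOrder A] [StarOrderedRing A]
    {a : A} {c : ℝ} (hc : 0 ≤ c) (h : algebraMap ℝ A (c ^ 2) ≤ a) :
    algebraMap ℝ A c ≤ CFC.sqrt a := by
  have hc' : 0 ≤ algebraMap ℝ A c := algebraMap_nonneg A hc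
  calc algebraMap ℝ A c = CFC.sqrt (algebraMap ℝ A c ^ 2) := (CFC.sqrt_sq _).symm
    _ ≤ CFC.sqrt a := CFC.sqrt_le_sqrt _ _ (by rwa [← map_pow])

namespace LinearMap
variable {𝕜 E : Type*} [RCLike 𝕜] [NormedAddCommGroup E] [InnerProductSpace 𝕜 E]


theorem inner_apply_mul_self_sub_mul_self {S T : E →ₗ[𝕜] E} (hX : (S - T).IsSymmetric)
    {v : E} {ν : ℝ} (hv : (S - T) v = (ν : 𝕜) • v) :
    ⟪v, (S * S - T * T) v⟫_𝕜 = ν * (⟪v, S v⟫_𝕜 + ⟪v, T v⟫_𝕜) := by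
  have hST : S * S - T * T = S * (S - T) + (S - T) * T := by noncomm_ring
  rw [hST, add_apply, Module.End.mul_apply, Module.End.mul_apply, inner_add_right, hv, map_smul,
    inner_smul_right, ← hX, hv, inner_smul_left, RCLike.conj_ofReal, mul_add]

end LinearMap

namespace Matrix
variable {𝕜 n : Type*} [RCLike 𝕜] [Fintype n] [DecidableEq n]

theorem toEuclideanLin_algebraMap (c : ℝ) (u : EuclideanSpace 𝕜 n) :
    toEuclideanLin (algebraMap ℝ (Matrix n n 𝕜) c) u = (c : 𝕜) • u := by
  rw [IsScalarTower.algebraMap_apply ℝ 𝕜]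
  exact congr($((toLpLinAlgEquiv 2).commutes (c : 𝕜)) u)

theorem algebraMap_le_iff_forall_re_inner {A : Matrix n n 𝕜} (hA : A.IsHermitian) (c : ℝ) :
    algebraMap ℝ (Matrix n n 𝕜) c ≤ A ↔
      ∀ u : EuclideanSpace 𝕜 n, c * ‖u‖ ^ 2 ≤ re ⟪u, toEuclideanLin A u⟫_𝕜 := by
  have hsub (u : EuclideanSpace 𝕜 n) : re ⟪u, toEuclideanLin (A - algebraMap ℝ _ c) u⟫_𝕜
      = re ⟪u, toEuclideanLin A u⟫_𝕜 - c * ‖u‖ ^ 2 := by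
    rw [map_sub, LinearMap.sub_apply, inner_sub_right, toEuclideanLin_algebraMap, inner_smul_right,
      inner_self_eq_norm_sq_to_K, map_sub, ← ofReal_pow, ← ofReal_mul, ofReal_re]
  rw [le_iff, ← isPositive_toEuclideanLin_iff]
  refine ⟨fun h u => ?_, fun h => ⟨?_, fun u => ?_⟩⟩
  · linarith [hsub u, h.re_inner_nonneg_right u]
  · exact isSymmetric_toEuclideanLin_iff.2
      (hA.sub ((IsSelfAdjoint.all c).algebraMap (Matrix n n 𝕜)))
  · rw [inner_re_symm, hsub]; linarith [h u]

theorem IsHermitian.l2_opNorm_eq {A : Matrix n n 𝕜} (hA : A.IsHermitian) :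
    ‖A‖ = ‖hA.eigenvalues‖ := by
  conv_lhs => rw [hA.spectral_theorem]
  rw [Unitary.conjStarAlgAut_apply, ← Unitary.coe_star, CStarRing.norm_mul_coe_unitary,
    CStarRing.norm_coe_unitary_mul, l2_opNorm_diagonal]
  exact ((algebraMap_isometry ℝ 𝕜).postcomp_pi).norm_map_of_map_zero (by simp) _

theorem norm_inner_toEuclideanLin_self_le (A : Matrix n n 𝕜) {v : EuclideanSpace 𝕜 n}
    (hv : ‖v‖ = 1) : ‖⟪v, toEuclideanLin A v⟫_𝕜‖ ≤ ‖A‖ := by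
  calc ‖⟪v, toEuclideanLin A v⟫_𝕜‖ ≤ ‖v‖ * ‖toEuclideanCLM (n := n) (𝕜 := 𝕜) A v‖ :=
        norm_inner_le_norm _ _
    _ ≤ ‖A‖ := by
        rw [cstar_norm_def]
        simpa [hv] using (toEuclideanCLM (n := n) (𝕜 := 𝕜) A).le_opNorm v

theorem abs_eigenvalues_sub_mul_le {S T : Matrix n n 𝕜} (hS : S.IsHermitian) (hT : T.IsHermitian)
    {α β : ℝ} (hSα : algebraMap ℝ _ α ≤ S) (hTβ : algebraMap ℝ _ β ≤ T) (i : n) :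
    |(hS.sub hT).eigenvalues i| * (α + β) ≤ ‖S * S - T * T‖ := by
  set X := hS.sub hT
  set v := X.eigenvectorBasis i
  set ν := X.eigenvalues i
  have hv : ‖v‖ = 1 := X.eigenvectorBasis.orthonormal.1 i
  have hSv : α ≤ re ⟪v, toEuclideanLin S v⟫_𝕜 := by
    simpa [hv] using (algebraMap_le_iff_forall_re_inner hS α).1 hSα v
  have hTv : β ≤ re ⟪v, toEuclideanLin T v⟫_𝕜 := by
    simpa [hv] using (algebraMap_le_iff_forall_re_inner hT β).1 hTβ v
  have hXv : (toEuclideanLin S - toEuclideanLin T) v = (ν : 𝕜) • v := by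
    rw [← map_sub, toLpLin_apply, X.mulVec_eigenvectorBasis i]
    ext j
    exact RCLike.real_smul_eq_coe_smul (K := 𝕜) _ _
  have hid := LinearMap.inner_apply_mul_self_sub_mul_self
    (by simpa using isSymmetric_toEuclideanLin_iff.2 X) hXv
  have hMM : toEuclideanLin (S * S - T * T)
      = toEuclideanLin S * toEuclideanLin S - toEuclideanLin T * toEuclideanLin T := by
    rw [map_sub, toLpLin_mul_same, toLpLin_mul_same]; rfl
  calc |ν| * (α + β) ≤ |ν| * re (⟪v, toEuclideanLin S v⟫_𝕜 + ⟪v, toEuclideanLin T v⟫_𝕜) := by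
        gcongr; rw [map_add]; linarith
    _ ≤ |ν * re (⟪v, toEuclideanLin S v⟫_𝕜 + ⟪v, toEuclideanLin T v⟫_𝕜)| := by
        rw [abs_mul]; exact mul_le_mul_of_nonneg_left (le_abs_self _) (abs_nonneg _)
    _ = |re ⟪v, toEuclideanLin (S * S - T * T) v⟫_𝕜| := by rw [hMM, hid, re_ofReal_mul]
    _ ≤ ‖⟪v, toEuclideanLin (S * S - T * T) v⟫_𝕜‖ := abs_re_le_norm _
    _ ≤ ‖S * S - T * T‖ := norm_inner_toEuclideanLin_self_le _ hv

theorem l2_opNorm_sub_le_div {S T : Matrix n n 𝕜} (hS : S.IsHermitian) (hT : T.IsHermitian)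
    {α β : ℝ} (hSα : algebraMap ℝ _ α ≤ S) (hTβ : algebraMap ℝ _ β ≤ T) (hαβ : 0 < α + β) :
    ‖S - T‖ ≤ ‖S * S - T * T‖ / (α + β) := by
  rw [(hS.sub hT).l2_opNorm_eq]
  refine (pi_norm_le_iff_of_nonneg (by positivity)).2 fun i => ?_
  rw [Real.norm_eq_abs, le_div_iff₀ hαβ]
  exact abs_eigenvalues_sub_mul_le hS hT hSα hTβ i

end Matrix

theorem herPow_half_eq_sqrt {N : ℕ} {A : Matrix (Fin N) (Fin N) ℂ} (hA : A.IsHermitian)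
    (hA₀ : 0 ≤ A) : herPow A hA (1 / 2) = CFC.sqrt A := by
  rw [herPow, ← hA.cfc_eq, ← CFC.rpow_eq_cfc_real, CFC.sqrt_eq_rpow]

/-- **Square-root perturbation bound.** If `A, B` are Hermitian positive definite with
`A ≽ α²I`, `B ≽ β²I` for some `α, β > 0`, then `‖A^{1/2} - B^{1/2}‖ ≤ ‖A - B‖ / (α + β)`
in the ℓ²-operator norm. -/
theorem sqrt_perturbation_bound {n : ℕ} (α β : ℝ) (hα : 0 < α) (hβ : 0 < β)
    (A B : Matrix (Fin n) (Fin n) ℂ) (hA : A.PosDef) (hB : B.PosDef)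
    (hAα : ∀ u : EuclideanSpace ℂ (Fin n),
      α ^ 2 * ‖u‖ ^ 2 ≤ ((inner ℂ u (Matrix.toEuclideanLin A u) : ℂ)).re)
    (hBβ : ∀ u : EuclideanSpace ℂ (Fin n),
      β ^ 2 * ‖u‖ ^ 2 ≤ ((inner ℂ u (Matrix.toEuclideanLin B u) : ℂ)).re) :
    l2OpNorm (herPow A hA.1 (1/2) - herPow B hB.1 (1/2)) ≤ l2OpNorm (A - B) / (α + β) := by
  have hSα : algebraMap ℝ _ α ≤ CFC.sqrt A :=
    CFC.algebraMap_le_sqrt hα.le ((Matrix.algebraMap_le_iff_forall_re_inner hA.1 _).2 hAα)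
  have hTβ : algebraMap ℝ _ β ≤ CFC.sqrt B :=
    CFC.algebraMap_le_sqrt hβ.le ((Matrix.algebraMap_le_iff_forall_re_inner hB.1 _).2 hBβ)
  have key := Matrix.l2_opNorm_sub_le_div
    (Matrix.nonneg_iff_posSemidef.1 (CFC.sqrt_nonneg A)).isHermitian
    (Matrix.nonneg_iff_posSemidef.1 (CFC.sqrt_nonneg B)).isHermitian hSα hTβ (by positivity)
  rw [CFC.sqrt_mul_sqrt_self A, CFC.sqrt_mul_sqrt_self B] at key
  rwa [herPow_half_eq_sqrt hA.1 hA.posSemidef.nonneg, herPow_half_eq_sqrt hB.1 hB.posSemidef.nonneg]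
end

section
/- Let A be an n×n complex Hermitian matrix with A ≽ I and let B be an n×n complex Hermitian matrix with ‖A − B‖ ≤ 1/2 in the ℓ²-operator norm. Then B is positive definite with B ≽ (1/2)I, and the quarter-power perturbation bound ‖A^{1/4} − B^{1/4}‖ ≤ ‖A − B‖ / ((1 + 2^{−1/2})(1 + 2^{−1/4})) holds. -/
open MeasureTheory
open scoped ComplexOrder

/-! Testing `S² - T² = S (S - T) + (S - T) T` against a unit eigenvector of the self-adjoint
operator `S - T` whose eigenvalue has modulus `‖S - T‖` shows that `‖S - T‖ (α + β) ≤ ‖S² - T²‖`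
whenever `S ≽ α` and `T ≽ β`. Since `‖A - B‖ ≤ 1/2` forces `B ≽ 1/2`, applying this to
`A^{1/2}, B^{1/2}` (bounded below by `1` and `2^{-1/2}`) and then to `A^{1/4}, B^{1/4}` (bounded
below by `1` and `2^{-1/4}`) gives the claim. -/

open scoped InnerProductSpace

section CStarAlgebra

variable {A : Type*} [CStarAlgebra A] [PartialOrder A] [StarOrderedRing A]

theorem IsSelfAdjoint.of_algebraMap_le {a : A} {c : ℝ} (h : algebraMap ℝ A c ≤ a) :
    IsSelfAdjoint a := by
  simpa using (sub_nonneg.2 h).isSelfAdjoint.add (.algebraMap A (.all c))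

theorem nonneg_of_algebraMap_le {a : A} {c : ℝ} (hc : 0 ≤ c) (h : algebraMap ℝ A c ≤ a) :
    0 ≤ a :=
  (algebraMap_nonneg A hc).trans h

theorem algebraMap_sub_le_of_norm_sub_le {a b : A} {c d : ℝ} (ha : algebraMap ℝ A c ≤ a)
    (hb : IsSelfAdjoint b) (hab : ‖a - b‖ ≤ d) : algebraMap ℝ A (c - d) ≤ b :=
  calc algebraMap ℝ A (c - d) = algebraMap ℝ A c - algebraMap ℝ A d := map_sub _ _ _
    _ ≤ a - algebraMap ℝ A ‖a - b‖ := by gcongr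
    _ ≤ a - (a - b) :=
      sub_le_sub_left ((IsSelfAdjoint.of_algebraMap_le ha).sub hb).le_algebraMap_norm_self a
    _ = b := sub_sub_cancel a b

theorem CFC.algebraMap_rpow_le_rpow {a : A} {c r : ℝ} (hc : 0 ≤ c) (hr : 0 ≤ r)
    (ha : algebraMap ℝ A c ≤ a) : algebraMap ℝ A (c ^ r) ≤ a ^ r := by
  have ha_nonneg : 0 ≤ a := nonneg_of_algebraMap_le hc ha
  rw [CFC.rpow_eq_cfc_real]
  refine algebraMap_le_cfc _ _ a fun x hx => Real.rpow_le_rpow hc ?_ hr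
  exact (algebraMap_le_iff_le_spectrum ha_nonneg.isSelfAdjoint).1 ha x hx

end CStarAlgebra

namespace ContinuousLinearMap

variable {E : Type*} [NormedAddCommGroup E] [InnerProductSpace ℂ E]

theorem algebraMap_le_iff_forall_re_inner [CompleteSpace E] {T : E →L[ℂ] E}
    (hT : IsSelfAdjoint T) (c : ℝ) :
    algebraMap ℝ (E →L[ℂ] E) c ≤ T ↔ ∀ u, c * ‖u‖ ^ 2 ≤ (⟪u, T u⟫_ℂ).re := by
  rw [le_def, isPositive_def', and_iff_right (hT.sub (.algebraMap _ (.all c)))]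
  refine forall_congr' fun u => ?_
  rw [reApplyInnerSelf_apply, sub_apply, inner_sub_left, map_sub, sub_nonneg, inner_re_symm (T u),
    algebraMap_apply, RCLike.real_smul_eq_coe_smul (K := ℂ), inner_smul_real_left,
    inner_self_eq_norm_sq_to_K]
  norm_cast

theorem inner_mul_self_sub_mul_self_of_eigenvector [CompleteSpace E] {S T : E →L[ℂ] E}
    (hST : IsSelfAdjoint (S - T)) {μ : ℝ} {v : E} (hv : (S - T) v = (μ : ℂ) • v) :
    ⟪v, (S * S - T * T) v⟫_ℂ = μ * (⟪v, S v⟫_ℂ + ⟪v, T v⟫_ℂ) := by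
  have hsplit : (S * S - T * T) v = S ((S - T) v) + (S - T) (T v) := by
    simp only [sub_apply, map_sub]
    abel
  have hsymm : ⟪(S - T) v, T v⟫_ℂ = ⟪v, (S - T) (T v)⟫_ℂ := hST.isSymmetric v (T v)
  rw [hsplit, inner_add_right, ← hsymm, hv, map_smul, inner_smul_right, inner_smul_left,
    Complex.conj_ofReal, mul_add]

variable [FiniteDimensional ℂ E]

theorem hasEigenvalue_of_mem_spectrum {T : E →L[ℂ] E} {μ : ℂ} (h : μ ∈ spectrum ℂ T) :
    Module.End.HasEigenvalue (T : E →ₗ[ℂ] E) μ := by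
  let e : (E →ₗ[ℂ] E) ≃ₐ[ℂ] (E →L[ℂ] E) :=
    AlgEquiv.ofLinearEquiv LinearMap.toContinuousLinearMap rfl fun _ _ => rfl
  rw [Module.End.hasEigenvalue_iff_mem_spectrum, ← AlgEquiv.spectrum_eq e]
  exact h

theorem exists_eigenvector_abs_eq_norm [Nontrivial E] {D : E →L[ℂ] E} (hD : IsSelfAdjoint D) :
    ∃ (μ : ℝ) (v : E), ‖v‖ = 1 ∧ D v = (μ : ℂ) • v ∧ |μ| = ‖D‖ := by
  obtain ⟨z, hz, hzD⟩ := spectrum.exists_nnnorm_eq_spectralRadius D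
  rw [D.spectralRadius_eq_nnnorm hD, ENNReal.coe_inj] at hzD
  have hz_real : z = (z.re : ℂ) := hD.mem_spectrum_eq_re hz
  obtain ⟨w, hw, hw0⟩ := (hasEigenvalue_of_mem_spectrum hz).exists_hasEigenvector
  have hDw : D w = (z.re : ℂ) • w := hz_real ▸ Module.End.mem_eigenspace_iff.mp hw
  refine ⟨z.re, (‖w‖⁻¹ : ℂ) • w, norm_smul_inv_norm hw0, by rw [map_smul, hDw, smul_comm], ?_⟩
  rw [← Real.norm_eq_abs, ← Complex.norm_real, ← hz_real]
  exact congrArg NNReal.toReal hzD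

theorem norm_sub_mul_le_norm_mul_self_sub {S T : E →L[ℂ] E} {α β : ℝ}
    (hS : algebraMap ℝ (E →L[ℂ] E) α ≤ S) (hT : algebraMap ℝ (E →L[ℂ] E) β ≤ T) :
    ‖S - T‖ * (α + β) ≤ ‖S * S - T * T‖ := by
  have hS_sa := IsSelfAdjoint.of_algebraMap_le hS
  have hT_sa := IsSelfAdjoint.of_algebraMap_le hT
  rcases subsingleton_or_nontrivial E with hE | hE
  · simp [Subsingleton.elim (S - T) 0]
  obtain ⟨μ, v, hv, hDv, hμ⟩ := exists_eigenvector_abs_eq_norm (hS_sa.sub hT_sa)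
  have hquad := inner_mul_self_sub_mul_self_of_eigenvector (hS_sa.sub hT_sa) hDv
  have hSv := (algebraMap_le_iff_forall_re_inner hS_sa α).1 hS v
  have hTv := (algebraMap_le_iff_forall_re_inner hT_sa β).1 hT v
  rw [hv, one_pow, mul_one] at hSv hTv
  calc ‖S - T‖ * (α + β) = |μ| * (α + β) := by rw [hμ]
    _ ≤ |μ| * ((⟪v, S v⟫_ℂ).re + (⟪v, T v⟫_ℂ).re) := by gcongr
    _ ≤ |μ * ((⟪v, S v⟫_ℂ).re + (⟪v, T v⟫_ℂ).re)| := by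
      rw [abs_mul]; gcongr; exact le_abs_self _
    _ = |(⟪v, (S * S - T * T) v⟫_ℂ).re| := by rw [hquad]; simp
    _ ≤ ‖⟪v, (S * S - T * T) v⟫_ℂ‖ := Complex.abs_re_le_norm _
    _ ≤ ‖v‖ * (‖S * S - T * T‖ * ‖v‖) :=
      (norm_inner_le_norm _ _).trans (by gcongr; exact le_opNorm _ _)
    _ = ‖S * S - T * T‖ := by rw [hv]; ring

theorem norm_rpow_sub_rpow_mul_le {a b : E →L[ℂ] E} {α β r : ℝ} (hα : 0 < α) (hβ : 0 < β)
    (hr : 0 ≤ r) (ha : algebraMap ℝ (E →L[ℂ] E) α ≤ a) (hb : algebraMap ℝ (E →L[ℂ] E) β ≤ b) :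
    ‖a ^ r - b ^ r‖ * (α ^ r + β ^ r) ≤ ‖a ^ (r + r) - b ^ (r + r)‖ := by
  rw [CFC.rpow_add ((isStrictlyPositive_algebraMap hα).of_le ha).isUnit,
    CFC.rpow_add ((isStrictlyPositive_algebraMap hβ).of_le hb).isUnit]
  exact norm_sub_mul_le_norm_mul_self_sub (CFC.algebraMap_rpow_le_rpow hα.le hr ha)
    (CFC.algebraMap_rpow_le_rpow hβ.le hr hb)

end ContinuousLinearMap

namespace Matrix

theorem IsHermitian.posDef_of_algebraMap_le_toEuclideanCLM {n : Type*} [Fintype n]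
    [DecidableEq n] {A : Matrix n n ℂ} (hA : A.IsHermitian) {c : ℝ} (hc : 0 < c)
    (h : algebraMap ℝ _ c ≤ toEuclideanCLM (n := n) (𝕜 := ℂ) A) : A.PosDef := by
  refine hA.posDef_iff_eigenvalues_pos.2 fun i => hc.trans_le ?_
  have hspec : spectrum ℝ (toEuclideanCLM (n := n) (𝕜 := ℂ) A) = spectrum ℝ A :=
    AlgEquiv.spectrum_eq ((toEuclideanCLM (n := n) (𝕜 := ℂ)).toAlgEquiv.restrictScalars ℝ) A
  exact (algebraMap_le_iff_le_spectrum (IsSelfAdjoint.of_algebraMap_le h)).1 h _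
    (hspec ▸ hA.eigenvalues_mem_spectrum_real i)

theorem l2OpNorm_eq_norm_toEuclideanCLM {n : ℕ} (M : Matrix (Fin n) (Fin n) ℂ) :
    l2OpNorm M = ‖toEuclideanCLM (n := Fin n) (𝕜 := ℂ) M‖ := rfl

theorem toEuclideanCLM_herPow {n : ℕ} {A : Matrix (Fin n) (Fin n) ℂ} (hA : A.IsHermitian)
    (h : 0 ≤ toEuclideanCLM (n := Fin n) (𝕜 := ℂ) A) (r : ℝ) :
    toEuclideanCLM (n := Fin n) (𝕜 := ℂ) (herPow A hA r) =
      toEuclideanCLM (n := Fin n) (𝕜 := ℂ) A ^ r := by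
  rw [herPow, ← hA.cfc_eq, StarAlgHomClass.map_cfc (S := ℂ) _ _ _
    (A.finite_real_spectrum.continuousOn _) (hφ := ?_), CFC.rpow_eq_cfc_real]
  exact (toEuclideanCLM (n := Fin n) (𝕜 := ℂ)).toAlgEquiv.toLinearMap.continuous_of_finiteDimensional

end Matrix

theorem Real.one_half_rpow (r : ℝ) : (1 / 2 : ℝ) ^ r = 2 ^ (-r) := by
  rw [one_div, Real.inv_rpow zero_le_two, Real.rpow_neg zero_le_two]

open Matrix ContinuousLinearMap

/-- **Quarter-power perturbation bound.** If `A` is Hermitian with `A ≽ I` and `B` is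
Hermitian with `‖A - B‖ ≤ 1/2` in the ℓ²-operator norm, then `B` is positive definite with
`B ≽ (1/2)I`, and `‖A^{1/4} - B^{1/4}‖ ≤ ‖A - B‖ / ((1 + 2^{-1/2})(1 + 2^{-1/4}))`. -/
theorem quarter_power_perturbation_bound {n : ℕ}
    (A B : Matrix (Fin n) (Fin n) ℂ) (hA : A.IsHermitian) (hB : B.IsHermitian)
    (hAI : ∀ u : EuclideanSpace ℂ (Fin n),
      ‖u‖ ^ 2 ≤ ((inner ℂ u (Matrix.toEuclideanLin A u) : ℂ)).re)
    (hAB : l2OpNorm (A - B) ≤ 1/2) :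
    B.PosDef ∧
    (∀ u : EuclideanSpace ℂ (Fin n),
      (1/2) * ‖u‖ ^ 2 ≤ ((inner ℂ u (Matrix.toEuclideanLin B u) : ℂ)).re) ∧
    l2OpNorm (herPow A hA (1/4) - herPow B hB (1/4)) ≤
      l2OpNorm (A - B) / ((1 + (2:ℝ) ^ (-(1/2 : ℝ))) * (1 + (2:ℝ) ^ (-(1/4 : ℝ)))) := by
  set a := toEuclideanCLM (n := Fin n) (𝕜 := ℂ) A
  set b := toEuclideanCLM (n := Fin n) (𝕜 := ℂ) B
  have hb_sa : IsSelfAdjoint b := hB.isSelfAdjoint.map _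
  have ha : algebraMap ℝ _ 1 ≤ a :=
    (algebraMap_le_iff_forall_re_inner (hA.isSelfAdjoint.map _) 1).2 fun u =>
      (one_mul _).trans_le (hAI u)
  have hb : algebraMap ℝ _ (1 / 2) ≤ b := by
    have := algebraMap_sub_le_of_norm_sub_le (d := 1 / 2) ha hb_sa (by rw [← map_sub]; exact hAB)
    rwa [show (1 : ℝ) - 1 / 2 = 1 / 2 by norm_num] at this
  refine ⟨hB.posDef_of_algebraMap_le_toEuclideanCLM one_half_pos hb,
    (algebraMap_le_iff_forall_re_inner hb_sa _).1 hb, ?_⟩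
  have ha0 := nonneg_of_algebraMap_le zero_le_one ha
  have hb0 := nonneg_of_algebraMap_le one_half_pos.le hb
  have h₁ := norm_rpow_sub_rpow_mul_le one_pos one_half_pos (r := 1 / 4) (by norm_num) ha hb
  have h₂ := norm_rpow_sub_rpow_mul_le one_pos one_half_pos (r := 1 / 2) (by norm_num) ha hb
  rw [show (1 / 4 : ℝ) + 1 / 4 = 1 / 2 by norm_num, Real.one_rpow, Real.one_half_rpow] at h₁
  rw [show (1 / 2 : ℝ) + 1 / 2 = 1 by norm_num, Real.one_rpow, Real.one_half_rpow,
    CFC.rpow_one a ha0, CFC.rpow_one b hb0] at h₂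
  rw [l2OpNorm_eq_norm_toEuclideanCLM, l2OpNorm_eq_norm_toEuclideanCLM, map_sub, map_sub,
    toEuclideanCLM_herPow hA ha0, toEuclideanCLM_herPow hB hb0, le_div_iff₀ (by positivity),
    mul_comm (1 + _), ← mul_assoc]
  exact (mul_le_mul_of_nonneg_right h₁ (by positivity)).trans h₂
end

section
/- Let A be an n×n complex Hermitian positive definite matrix, let E be an n×n complex Hermitian matrix, let a, b ∈ ℝ and C ≥ 0, and assume |⟨u, E w⟩| ≤ C ‖A^a u‖ ‖A^b w‖ for all u, w ∈ ℂⁿ. Let D := ∫₀^∞ exp(−t A^{1/2}) E exp(−t A^{1/2}) dt and define F := −A^{−1/2} D A^{−1/2}. Then |⟨u, F w⟩| ≤ (C/2) ‖A^{a−3/4} u‖ ‖A^{b−3/4} w‖ for all u, w ∈ ℂⁿ. -/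
open MeasureTheory
open scoped ComplexOrder

attribute [local instance] Matrix.normedAddCommGroup Matrix.normedSpace

/-- The matrix exponential, defined by its power series `exp A = ∑ Aᵏ / k!`. -/
noncomputable def matExp {N : ℕ} (A : Matrix (Fin N) (Fin N) ℂ) : Matrix (Fin N) (Fin N) ℂ :=
  ∑' k : ℕ, ((k.factorial : ℂ)⁻¹) • A ^ k

/-!
Write `e(t) = exp(-t A^{1/2})`, so that `D = ∫₀^∞ e(t) E e(t) dt` and
`⟨u, F w⟩ = -∫₀^∞ ⟨e(t) A^{-1/2} u, E e(t) A^{-1/2} w⟩ dt`. The hypothesis bounds the integrand by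
`C ‖A^{a-1/2} e(t) u‖ ‖A^{b-1/2} e(t) w‖`, and Cauchy–Schwarz in `t` gives the claim since
`∫₀^∞ ‖A^r e(t) x‖² dt = ‖A^{r-1/4} x‖² / 2`: on an eigenvector with eigenvalue `λ > 0` this is
`∫₀^∞ λ^{2r} e^{-2t√λ} dt = λ^{2r-1/2} / 2`.
-/

open Matrix Unitary Set
open scoped InnerProductSpace

section Scalar

variable {α : Type*} [MeasurableSpace α] {μ : Measure α}

theorem integral_mul_le_sqrt_mul_sqrt {f g : α → ℝ} (hf₀ : 0 ≤ᵐ[μ] f) (hg₀ : 0 ≤ᵐ[μ] g)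
    (hf : MemLp f 2 μ) (hg : MemLp g 2 μ) :
    ∫ a, f a * g a ∂μ ≤ √(∫ a, f a ^ 2 ∂μ) * √(∫ a, g a ^ 2 ∂μ) := by
  have h := integral_mul_le_Lp_mul_Lq_of_nonneg Real.HolderConjugate.two_two hf₀ hg₀
    (by simpa using hf) (by simpa using hg)
  simpa only [Real.rpow_two, Real.sqrt_eq_rpow, one_div] using h

theorem mul_exp_neg_sq (c m t : ℝ) :
    (c * Real.exp (-t * m)) ^ 2 = c ^ 2 * Real.exp (-(2 * m) * t) := by
  rw [mul_pow, ← Real.exp_nat_mul]; ring_nf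

theorem memLp_two_mul_exp_neg (c : ℝ) {m : ℝ} (hm : 0 < m) :
    MemLp (fun t => c * Real.exp (-t * m)) 2 (volume.restrict (Ioi 0)) := by
  refine (memLp_two_iff_integrable_sq (by fun_prop)).2 ?_
  simp_rw [mul_exp_neg_sq]
  exact (exp_neg_integrableOn_Ioi 0 (by positivity)).const_mul _

theorem integral_Ioi_mul_exp_neg_sq (c : ℝ) {m : ℝ} (hm : 0 < m) :
    ∫ t in Ioi 0, (c * Real.exp (-t * m)) ^ 2 = c ^ 2 / (2 * m) := by
  simp_rw [mul_exp_neg_sq]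
  rw [integral_const_mul, integral_exp_mul_Ioi (by linarith), mul_zero, Real.exp_zero]
  field_simp

theorem Real.rpow_sq_div_two_mul_rpow_half {x : ℝ} (hx : 0 < x) (r : ℝ) :
    (x ^ r) ^ 2 / (2 * x ^ (1/2 : ℝ)) = (x ^ (r - 1/4)) ^ 2 / 2 := by
  rw [← Real.rpow_natCast, ← Real.rpow_natCast, ← Real.rpow_mul hx.le, ← Real.rpow_mul hx.le,
    show (r - 1/4) * ((2 : ℕ) : ℝ) = r * (2 : ℕ) - 1/2 by push_cast; ring, Real.rpow_sub hx]
  have := Real.rpow_pos_of_pos hx (1/2)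
  field_simp

end Scalar

-- `Integrable` sees the product topology on matrices, which is not reducibly the topology of the
-- local sup-norm instance, so instance search would find no `ContinuousENorm` without this.
noncomputable instance Matrix.enormedAddCommMonoid {m n α : Type*} [Fintype m] [Fintype n]
    [NormedAddCommGroup α] : ENormedAddCommMonoid (Matrix m n α) :=
  NormedAddCommGroup.toENormedAddCommMonoid

namespace Matrix

variable {n 𝕜 : Type*} [RCLike 𝕜] [Fintype n] [DecidableEq n] {A : Matrix n n 𝕜}

theorem inner_toEuclideanLin_integral {α : Type*} [MeasurableSpace α] {μ : Measure α}
    {M : α → Matrix n n 𝕜} (hM : Integrable M μ) (x y : EuclideanSpace 𝕜 n) :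
    ⟪x, toEuclideanLin (∫ t, M t ∂μ) y⟫_𝕜 = ∫ t, ⟪x, toEuclideanLin (M t) y⟫_𝕜 ∂μ := by
  let L : Matrix n n 𝕜 →L[𝕜] 𝕜 :=
    LinearMap.toContinuousLinearMap
      ((innerₛₗ 𝕜 x).comp ((LinearMap.applyₗ y).comp toEuclideanLin.toLinearMap))
  exact (L.integral_comp_comm hM).symm

theorem norm_inner_toEuclideanLin_integral_le {α : Type*} [MeasurableSpace α] {μ : Measure α}
    {M : α → Matrix n n 𝕜} (hM : Integrable M μ) (x y : EuclideanSpace 𝕜 n) {f g : α → ℝ}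
    (hf₀ : ∀ t, 0 ≤ f t) (hg₀ : ∀ t, 0 ≤ g t) (hf : MemLp f 2 μ) (hg : MemLp g 2 μ) {C : ℝ}
    (hC : 0 ≤ C) (hbound : ∀ t, ‖⟪x, toEuclideanLin (M t) y⟫_𝕜‖ ≤ C * (f t * g t)) :
    ‖⟪x, toEuclideanLin (∫ t, M t ∂μ) y⟫_𝕜‖ ≤ C * (√(∫ t, f t ^ 2 ∂μ) * √(∫ t, g t ^ 2 ∂μ)) :=
  calc ‖⟪x, toEuclideanLin (∫ t, M t ∂μ) y⟫_𝕜‖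
      ≤ ∫ t, C * (f t * g t) ∂μ := by
        rw [inner_toEuclideanLin_integral hM]
        exact (norm_integral_le_integral_norm _).trans <| integral_mono_of_nonneg
          (.of_forall fun _ => norm_nonneg _) ((hf.integrable_mul hg).const_mul C)
          (.of_forall hbound)
    _ ≤ C * (√(∫ t, f t ^ 2 ∂μ) * √(∫ t, g t ^ 2 ∂μ)) := by
        rw [integral_const_mul]
        exact mul_le_mul_of_nonneg_left (integral_mul_le_sqrt_mul_sqrt (.of_forall hf₀)
          (.of_forall hg₀) hf hg) hC

namespace IsHermitian

theorem inner_toEuclideanLin_conj (hA : A.IsHermitian) (M : Matrix n n 𝕜)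
    (x y : EuclideanSpace 𝕜 n) :
    ⟪x, toEuclideanLin (A * M * A) y⟫_𝕜
      = ⟪toEuclideanLin A x, toEuclideanLin M (toEuclideanLin A y)⟫_𝕜 := by
  rw [toLpLin_mul_same, toLpLin_mul_same, LinearMap.comp_apply, LinearMap.comp_apply,
    isSymmetric_toEuclideanLin_iff.mpr hA]

theorem cfc_mul_cfc (hA : A.IsHermitian) (f g : ℝ → ℝ) :
    hA.cfc f * hA.cfc g = hA.cfc (f * g) := by
  simp only [IsHermitian.cfc, ← map_mul, diagonal_mul_diagonal]
  congr 2; ext i; simp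

theorem cfc_congr_eigenvalues (hA : A.IsHermitian) {f g : ℝ → ℝ}
    (h : ∀ i, f (hA.eigenvalues i) = g (hA.eigenvalues i)) : hA.cfc f = hA.cfc g := by
  simp only [IsHermitian.cfc, Function.comp_def, h]

theorem isHermitian_cfc (hA : A.IsHermitian) (f : ℝ → ℝ) : (hA.cfc f).IsHermitian := by
  rw [← hA.cfc_eq]; exact cfc_predicate f A

theorem toEuclideanLin_cfc_eigenvectorBasis (hA : A.IsHermitian) (f : ℝ → ℝ) (j : n) :
    toEuclideanLin (hA.cfc f) (hA.eigenvectorBasis j)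
      = (f (hA.eigenvalues j) : 𝕜) • hA.eigenvectorBasis j := by
  ext1
  rw [toLpLin_apply, IsHermitian.cfc, conjStarAlgAut_apply, ← mulVec_mulVec, ← mulVec_mulVec,
    star_eigenvectorUnitary_mulVec, mulVec_single_one]
  simp [mulVec_single, Function.comp_def, RCLike.real_smul_eq_coe_mul, mul_comm]

theorem norm_toEuclideanLin_cfc_sq (hA : A.IsHermitian) (f : ℝ → ℝ) (x : EuclideanSpace 𝕜 n) :
    ‖toEuclideanLin (hA.cfc f) x‖ ^ 2
      = ∑ i, f (hA.eigenvalues i) ^ 2 * ‖⟪hA.eigenvectorBasis i, x⟫_𝕜‖ ^ 2 := by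
  rw [← hA.eigenvectorBasis.sum_sq_norm_inner_right]
  refine Finset.sum_congr rfl fun i _ => ?_
  rw [← isSymmetric_toEuclideanLin_iff.mpr (hA.isHermitian_cfc f),
    toEuclideanLin_cfc_eigenvectorBasis, inner_smul_left, norm_mul, RCLike.norm_conj,
    RCLike.norm_ofReal, mul_pow, sq_abs]

variable {α : Type*} [MeasurableSpace α] {μ : Measure α}

theorem memLp_norm_toEuclideanLin_cfc (hA : A.IsHermitian) {φ : α → ℝ → ℝ}
    (hφ : ∀ i, MemLp (fun t => φ t (hA.eigenvalues i)) 2 μ) (x : EuclideanSpace 𝕜 n) :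
    MemLp (fun t => ‖toEuclideanLin (hA.cfc (φ t)) x‖) 2 μ := by
  have hsqrt : (fun t => ‖toEuclideanLin (hA.cfc (φ t)) x‖) = fun t =>
      √(∑ i, φ t (hA.eigenvalues i) ^ 2 * ‖⟪hA.eigenvectorBasis i, x⟫_𝕜‖ ^ 2) := by
    ext t; rw [← hA.norm_toEuclideanLin_cfc_sq, Real.sqrt_sq (norm_nonneg _)]
  have hmeas : AEStronglyMeasurable (fun t => ‖toEuclideanLin (hA.cfc (φ t)) x‖) μ := by
    rw [hsqrt]
    exact Real.continuous_sqrt.comp_aestronglyMeasurable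
      (Finset.univ.aestronglyMeasurable_fun_sum fun i _ => ((hφ i).1.pow 2).mul_const _)
  refine (memLp_two_iff_integrable_sq hmeas).2 ?_
  simp_rw [hA.norm_toEuclideanLin_cfc_sq]
  exact integrable_finsetSum _ fun i _ => (hφ i).integrable_sq.mul_const _

theorem integral_norm_toEuclideanLin_cfc_sq (hA : A.IsHermitian) {φ : α → ℝ → ℝ}
    (hφ : ∀ i, MemLp (fun t => φ t (hA.eigenvalues i)) 2 μ) (x : EuclideanSpace 𝕜 n) :
    ∫ t, ‖toEuclideanLin (hA.cfc (φ t)) x‖ ^ 2 ∂μ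
      = ∑ i, (∫ t, φ t (hA.eigenvalues i) ^ 2 ∂μ) * ‖⟪hA.eigenvectorBasis i, x⟫_𝕜‖ ^ 2 := by
  simp_rw [hA.norm_toEuclideanLin_cfc_sq]
  rw [integral_finsetSum _ fun i _ => (hφ i).integrable_sq.mul_const _]
  simp_rw [integral_mul_const]

end IsHermitian

namespace PosDef

theorem memLp_norm_cfc_rpow_mul_exp (hA : A.PosDef) (r : ℝ) (x : EuclideanSpace 𝕜 n) :
    MemLp (fun t => ‖toEuclideanLin (hA.1.cfc fun y => y ^ r * Real.exp (-t * y ^ (1/2 : ℝ))) x‖)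
      2 (volume.restrict (Ioi 0)) :=
  hA.1.memLp_norm_toEuclideanLin_cfc (fun i =>
    memLp_two_mul_exp_neg _ (Real.rpow_pos_of_pos (hA.eigenvalues_pos i) _)) x

theorem integral_norm_cfc_rpow_mul_exp_sq (hA : A.PosDef) (r : ℝ) (x : EuclideanSpace 𝕜 n) :
    ∫ t in Ioi 0, ‖toEuclideanLin (hA.1.cfc fun y => y ^ r * Real.exp (-t * y ^ (1/2 : ℝ))) x‖ ^ 2
      = ‖toEuclideanLin (hA.1.cfc fun y => y ^ (r - 1/4)) x‖ ^ 2 / 2 := by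
  rw [hA.1.integral_norm_toEuclideanLin_cfc_sq (fun i =>
      memLp_two_mul_exp_neg _ (Real.rpow_pos_of_pos (hA.eigenvalues_pos i) _)),
    hA.1.norm_toEuclideanLin_cfc_sq, Finset.sum_div]
  refine Finset.sum_congr rfl fun i _ => ?_
  rw [integral_Ioi_mul_exp_neg_sq _ (Real.rpow_pos_of_pos (hA.eigenvalues_pos i) _),
    Real.rpow_sq_div_two_mul_rpow_half (hA.eigenvalues_pos i), div_mul_eq_mul_div]

theorem toEuclideanLin_herPow_cfc_herPow {N : ℕ} {A : Matrix (Fin N) (Fin N) ℂ}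
    (hA : A.PosDef) (r s : ℝ) (g : ℝ → ℝ) (x : EuclideanSpace ℂ (Fin N)) :
    toEuclideanLin (herPow A hA.1 r)
        (toEuclideanLin (hA.1.cfc g) (toEuclideanLin (herPow A hA.1 s) x))
      = toEuclideanLin (hA.1.cfc fun y => y ^ (r + s) * g y) x := by
  rw [← LinearMap.comp_apply, ← LinearMap.comp_apply, ← toLpLin_mul_same, ← toLpLin_mul_same,
    herPow, herPow, hA.1.cfc_mul_cfc, hA.1.cfc_mul_cfc]
  congr 2
  refine hA.1.cfc_congr_eigenvalues fun i => ?_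
  simp only [Pi.mul_apply, Real.rpow_add (hA.eigenvalues_pos i)]
  ring

end PosDef

end Matrix

theorem matExp_eq_exp {N : ℕ} : (matExp : Matrix (Fin N) (Fin N) ℂ → _) = NormedSpace.exp := by
  ext1 M; rw [NormedSpace.exp_eq_tsum ℂ, matExp]

theorem matExp_neg_smul_cfc {N : ℕ} {A : Matrix (Fin N) (Fin N) ℂ} (hA : A.IsHermitian)
    (f : ℝ → ℝ) (t : ℝ) :
    matExp ((-t) • hA.cfc f) = hA.cfc (fun x => Real.exp (-t * f x)) := by
  rw [matExp_eq_exp, IsHermitian.cfc, IsHermitian.cfc, ← Complex.coe_smul, ← map_smul,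
    conjStarAlgAut_apply, conjStarAlgAut_apply, ← diagonal_smul]
  refine (Matrix.exp_units_conj (Unitary.toUnits hA.eigenvectorUnitary) _).trans ?_
  rw [exp_diagonal]
  congr 3; ext i; simp [Complex.ofReal_exp, ← Complex.exp_eq_exp_ℂ]

theorem neg_inv_sqrt_conjugated_bilinear_bound_general {n : ℕ}
    (A : Matrix (Fin n) (Fin n) ℂ) (hA : A.PosDef)
    (E : Matrix (Fin n) (Fin n) ℂ) (a b C : ℝ) (hC : 0 ≤ C)
    (hbound : ∀ u w : EuclideanSpace ℂ (Fin n),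
      ‖(inner ℂ u (Matrix.toEuclideanLin E w) : ℂ)‖ ≤
        C * ‖Matrix.toEuclideanLin (herPow A hA.1 a) u‖ *
          ‖Matrix.toEuclideanLin (herPow A hA.1 b) w‖)
    (D F : Matrix (Fin n) (Fin n) ℂ)
    (hD : D = ∫ t in Set.Ici (0 : ℝ),
        matExp ((-t) • herPow A hA.1 (1/2)) * E * matExp ((-t) • herPow A hA.1 (1/2)))
    (hF : F = -(herPow A hA.1 (-(1/2)) * D * herPow A hA.1 (-(1/2)))) :
    ∀ u w : EuclideanSpace ℂ (Fin n),
      ‖(inner ℂ u (Matrix.toEuclideanLin F w) : ℂ)‖ ≤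
        (C / 2) * ‖Matrix.toEuclideanLin (herPow A hA.1 (a - 3/4)) u‖ *
          ‖Matrix.toEuclideanLin (herPow A hA.1 (b - 3/4)) w‖ := by
  intro u w
  set e : ℝ → Matrix (Fin n) (Fin n) ℂ := fun t => hA.1.cfc fun y => Real.exp (-t * y ^ (1/2 : ℝ))
  set P := herPow A hA.1 (-(1/2))
  set G : ℝ → EuclideanSpace ℂ (Fin n) → ℝ → ℝ := fun r x t =>
    ‖toEuclideanLin (hA.1.cfc fun y => y ^ r * Real.exp (-t * y ^ (1/2 : ℝ))) x‖
  have hD' : D = ∫ t in Ioi 0, e t * E * e t := by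
    simp only [hD, herPow, matExp_neg_smul_cfc, e, integral_Ici_eq_integral_Ioi]
  have hsq : ∀ r x, √(∫ t in Ioi 0, G (r - 1/2) x t ^ 2)
      = ‖toEuclideanLin (herPow A hA.1 (r - 3/4)) x‖ / √2 := by
    intro r x
    rw [hA.integral_norm_cfc_rpow_mul_exp_sq, show r - 1/2 - 1/4 = r - 3/4 by ring,
      Real.sqrt_div' _ zero_le_two, Real.sqrt_sq (norm_nonneg _), herPow]
  have hP : P.IsHermitian := hA.1.isHermitian_cfc _
  have he : ∀ t, (e t).IsHermitian := fun t => hA.1.isHermitian_cfc _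
  rw [hF, map_neg, LinearMap.neg_apply, inner_neg_right, norm_neg, hP.inner_toEuclideanLin_conj,
    hD']
  by_cases hint : IntegrableOn (fun t => e t * E * e t) (Ioi 0)
  swap
  · -- Otherwise `D = 0` by the convention for the Bochner integral.
    rw [integral_undef hint]
    simp only [map_zero, LinearMap.zero_apply, inner_zero_right, norm_zero]
    positivity
  calc _ ≤ C * (√(∫ t in Ioi 0, G (a - 1/2) u t ^ 2) * √(∫ t in Ioi 0, G (b - 1/2) w t ^ 2)) :=
        norm_inner_toEuclideanLin_integral_le hint _ _ (fun _ => norm_nonneg _)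
          (fun _ => norm_nonneg _) (hA.memLp_norm_cfc_rpow_mul_exp _ u)
          (hA.memLp_norm_cfc_rpow_mul_exp _ w) hC fun t => by
            have h := hbound (toEuclideanLin (e t) (toEuclideanLin P u))
              (toEuclideanLin (e t) (toEuclideanLin P w))
            rw [(he t).inner_toEuclideanLin_conj, ← mul_assoc]
            simpa only [e, P, G, hA.toEuclideanLin_herPow_cfc_herPow, sub_eq_add_neg] using h
    _ = _ := by
        rw [hsq, hsq, div_mul_div_comm, Real.mul_self_sqrt zero_le_two]
        ring

/-- **Fractional-order derivative trick (order -1/2).**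
Let `A` be Hermitian positive definite and `E` Hermitian with the bilinear bound
`|⟨u, E w⟩| ≤ C ‖A^a u‖ ‖A^b w‖`. With `D := ∫₀^∞ exp(-t A^{1/2}) E exp(-t A^{1/2}) dt` and
`F := -A^{-1/2} D A^{-1/2}`, one has `|⟨u, F w⟩| ≤ (C/2) ‖A^{a-3/4} u‖ ‖A^{b-3/4} w‖`. -/
theorem neg_inv_sqrt_conjugated_bilinear_bound {n : ℕ}
    (A : Matrix (Fin n) (Fin n) ℂ) (hA : A.PosDef)
    (E : Matrix (Fin n) (Fin n) ℂ) (hE : E.IsHermitian) (a b C : ℝ) (hC : 0 ≤ C)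
    (hbound : ∀ u w : EuclideanSpace ℂ (Fin n),
      ‖(inner ℂ u (Matrix.toEuclideanLin E w) : ℂ)‖ ≤
        C * ‖Matrix.toEuclideanLin (herPow A hA.1 a) u‖ *
          ‖Matrix.toEuclideanLin (herPow A hA.1 b) w‖)
    (D F : Matrix (Fin n) (Fin n) ℂ)
    (hD : D = ∫ t in Set.Ici (0 : ℝ),
        matExp ((-t) • herPow A hA.1 (1/2)) * E * matExp ((-t) • herPow A hA.1 (1/2)))
    (hF : F = -(herPow A hA.1 (-(1/2)) * D * herPow A hA.1 (-(1/2)))) :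
    ∀ u w : EuclideanSpace ℂ (Fin n),
      ‖(inner ℂ u (Matrix.toEuclideanLin F w) : ℂ)‖ ≤
        (C / 2) * ‖Matrix.toEuclideanLin (herPow A hA.1 (a - 3/4)) u‖ *
          ‖Matrix.toEuclideanLin (herPow A hA.1 (b - 3/4)) w‖ :=
  neg_inv_sqrt_conjugated_bilinear_bound_general A hA E a b C hC hbound D F hD hF
end

section
/- Let (Γ, μ) be a measure space, let E₁, E₂ be finite-dimensional real normed spaces, let T : E₁ × E₂ × ℝᵐ → ℝ be a bounded trilinear map, let g : ℝⁿ → ℝᵐ be continuously differentiable, and let K > 0. Then there exists a constant C > 0 with the following property: whenever u₁, u₁* ∈ L²(μ; E₁) and u₂, u₂* ∈ L²(μ; E₂) satisfy ‖u₁*‖_{L²} ≤ K ‖u₁‖_{L²} and ‖u₂*‖_{L²} ≤ K ‖u₂‖_{L²}, and v₁,…,vₙ and v₁*,…,vₙ* are measurable real-valued functions on Γ with ‖vⱼ‖_{L^∞} ≤ K and ‖vⱼ*‖_{L^∞} ≤ K for all j = 1,…,n, then, writing v = (v₁,…,vₙ) and v* = (v₁*,…,vₙ*), one has |∫_Γ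 T(u₁, u₂, g∘v) dμ − ∫_Γ T(u₁*, u₂*, g∘v*) dμ| ≤ C ( ‖u₁ − u₁*‖_{L²} ‖u₂‖_{L²} + ‖u₂ − u₂*‖_{L²} ‖u₁‖_{L²} + ‖u₁‖_{L²} ‖u₂‖_{L²} Σⱼ ‖vⱼ − vⱼ*‖_{L^∞} ). -/
/-!
Integration against `T` is a bounded trilinear form on `L² × L² × L^∞` (Hölder's inequality
twice), and for any bounded trilinear form `Φ` the telescoping
`Φ a b c - Φ a' b' c' = Φ (a - a') b c + Φ a' (b - b') c + Φ a' b' (c - c')` bounds the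
difference by the three products of norms. The functions `v`, `v*` take values a.e. in the
compact ball of radius `|K|`, where the `C¹` map `g` is bounded by some `M` and `L`-Lipschitz,
so `‖g ∘ v‖_∞ ≤ M` and `‖g ∘ v - g ∘ v*‖_∞ ≤ L ∑ⱼ ‖vⱼ - vⱼ*‖_∞`.
-/

open MeasureTheory ENNReal NNReal

namespace ContinuousLinearMap

variable {𝕜 A B C G : Type*} [NontriviallyNormedField 𝕜]
  [NormedAddCommGroup A] [NormedSpace 𝕜 A] [NormedAddCommGroup B] [NormedSpace 𝕜 B]
  [NormedAddCommGroup C] [NormedSpace 𝕜 C] [NormedAddCommGroup G] [NormedSpace 𝕜 G]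

theorem exists_norm_apply₃_sub_apply₃_le (Φ : A →L[𝕜] B →L[𝕜] C →L[𝕜] G) :
    ∃ M > 0, ∀ (a a' : A) (b b' : B) (c c' : C), ‖Φ a b c - Φ a' b' c'‖ ≤
      M * (‖a - a'‖ * ‖b‖ * ‖c‖ + ‖a'‖ * ‖b - b'‖ * ‖c‖ + ‖a'‖ * ‖b'‖ * ‖c - c'‖) := by
  -- instance search does not find `‖Φ‖` for a three-fold `→L`, hence the explicit codomain
  obtain ⟨M, hM, hΦ⟩ := bound (F := B →L[𝕜] C →L[𝕜] G) (σ₁₂ := RingHom.id 𝕜) Φ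
  have bound₃ : ∀ a b c, ‖Φ a b c‖ ≤ M * ‖a‖ * ‖b‖ * ‖c‖ := fun a b c =>
    ((Φ a).le_opNorm₂ b c).trans (by gcongr; exact hΦ a)
  refine ⟨M, hM, fun a a' b b' c c' => ?_⟩
  calc ‖Φ a b c - Φ a' b' c'‖
      = ‖Φ (a - a') b c + Φ a' (b - b') c + Φ a' b' (c - c')‖ := by
        simp only [map_sub, sub_apply]; abel_nf
    _ ≤ M * ‖a - a'‖ * ‖b‖ * ‖c‖ + M * ‖a'‖ * ‖b - b'‖ * ‖c‖ + M * ‖a'‖ * ‖b'‖ * ‖c - c'‖ :=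
      norm_add₃_le.trans (add_le_add_three (bound₃ ..) (bound₃ ..) (bound₃ ..))
    _ = _ := by ring

end ContinuousLinearMap

section

variable {α E F : Type*} [MeasurableSpace α] {μ : Measure α}
  [NormedAddCommGroup E] [NormedAddCommGroup F]

theorem toReal_eLpNorm_top_le_of_ae_bound {f : α → E} {C : ℝ} (hC : 0 ≤ C)
    (hfC : ∀ᵐ x ∂μ, ‖f x‖ ≤ C) : (eLpNorm f ∞ μ).toReal ≤ C := by
  rw [eLpNorm_exponent_top]
  exact ENNReal.toReal_le_of_le_ofReal hC (eLpNormEssSup_le_of_ae_bound hfC)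

theorem LipschitzOnWith.eLpNorm_comp_sub_comp_le {g : E → F} {L : ℝ≥0} {s : Set E}
    (hg : LipschitzOnWith L g s) {f f' : α → E} (hf : ∀ᵐ x ∂μ, f x ∈ s)
    (hf' : ∀ᵐ x ∂μ, f' x ∈ s) (p : ℝ≥0∞) :
    eLpNorm (fun x => g (f x) - g (f' x)) p μ ≤ L * eLpNorm (f - f') p μ := by
  refine eLpNorm_le_mul_eLpNorm_of_ae_le_mul' ?_ p
  filter_upwards [hf, hf'] with x hx hx'
  simpa only [Pi.sub_apply, ← edist_eq_enorm_sub] using hg hx hx'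

theorem eLpNorm_pi_le_sum {ι : Type*} [Fintype ι] {f : α → ι → E}
    (hf : ∀ i, AEStronglyMeasurable (fun x => f x i) μ) {p : ℝ≥0∞} (hp : 1 ≤ p) :
    eLpNorm f p μ ≤ ∑ i, eLpNorm (fun x => f x i) p μ := by
  have hpt : ∀ x, ‖f x‖ ≤ ‖∑ i, ‖f x i‖‖ := fun x => by
    rw [Real.norm_of_nonneg (by positivity), pi_norm_le_iff_of_nonneg (by positivity)]
    exact fun i => Finset.single_le_sum (f := fun i => ‖f x i‖) (fun _ _ => norm_nonneg _)
      (Finset.mem_univ i)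
  calc eLpNorm f p μ ≤ eLpNorm (∑ i, fun x => ‖f x i‖) p μ :=
        eLpNorm_mono fun x => by simpa only [Finset.sum_apply] using hpt x
    _ ≤ ∑ i, eLpNorm (fun x => ‖f x i‖) p μ := eLpNorm_sum_le (fun i _ => (hf i).norm) hp
    _ = ∑ i, eLpNorm (fun x => f x i) p μ := by simp only [eLpNorm_norm]

theorem LipschitzOnWith.toReal_eLpNorm_comp_sub_comp_le {ι : Type*} [Fintype ι]
    {g : (ι → E) → F} {L : ℝ≥0} {s : Set (ι → E)} (hg : LipschitzOnWith L g s)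
    {v v' : ι → α → E} (hv : ∀ᵐ x ∂μ, (fun i => v i x) ∈ s)
    (hv' : ∀ᵐ x ∂μ, (fun i => v' i x) ∈ s) {p : ℝ≥0∞} (hp : 1 ≤ p)
    (hvv' : ∀ i, MemLp (v i - v' i) p μ) :
    (eLpNorm (fun x => g (fun i => v i x) - g (fun i => v' i x)) p μ).toReal ≤
      L * ∑ i, (eLpNorm (v i - v' i) p μ).toReal := by
  have hfin : ∀ i, eLpNorm (v i - v' i) p μ ≠ ∞ := fun i => (hvv' i).eLpNorm_ne_top
  have hle := (hg.eLpNorm_comp_sub_comp_le hv hv' p).trans <| mul_le_mul_right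
    (eLpNorm_pi_le_sum (f := fun x i => v i x - v' i x) (fun i => (hvv' i).1) hp) _
  rw [← ENNReal.toReal_sum fun i _ => hfin i, ← ENNReal.coe_toReal L, ← ENNReal.toReal_mul]
  exact ENNReal.toReal_mono (mul_ne_top coe_ne_top (sum_ne_top.2 fun i _ => hfin i)) hle

theorem ae_mem_closedBall_abs_of_abs_le {ι : Type*} [Fintype ι] {v : ι → α → ℝ} {K : ℝ}
    (hv : ∀ i, ∀ᵐ x ∂μ, |v i x| ≤ K) :
    ∀ᵐ x ∂μ, (fun i => v i x) ∈ Metric.closedBall 0 |K| := by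
  filter_upwards [ae_all_iff.2 hv] with x hx
  rw [mem_closedBall_zero_iff, pi_norm_le_iff_of_nonneg (abs_nonneg K)]
  exact fun i => (hx i).trans (le_abs_self K)

variable (μ) {E₁ E₂ G : Type*} [NormedSpace ℝ F]
  [NormedAddCommGroup E₁] [NormedSpace ℝ E₁] [NormedAddCommGroup E₂] [NormedSpace ℝ E₂]
  [NormedAddCommGroup G] [NormedSpace ℝ G] [CompleteSpace G]
  (p q : ℝ≥0∞) [Fact (1 ≤ p)] [Fact (1 ≤ q)] [p.HolderConjugate q]

noncomputable def integralTrilinear (T : E₁ →L[ℝ] E₂ →L[ℝ] F →L[ℝ] G) :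
    Lp E₁ p μ →L[ℝ] Lp E₂ q μ →L[ℝ] Lp F ∞ μ →L[ℝ] G :=
  ((ContinuousLinearMap.id ℝ (F →L[ℝ] G)).lpPairing μ 1 ∞).postcomp (Lp E₂ q μ) ∘L
    T.holderL μ p q 1

variable {μ p q}

theorem integralTrilinear_toLp (T : E₁ →L[ℝ] E₂ →L[ℝ] F →L[ℝ] G) (u₁ : Lp E₁ p μ)
    (u₂ : Lp E₂ q μ) {h : α → F} (hh : MemLp h ∞ μ) :
    integralTrilinear μ p q T u₁ u₂ (hh.toLp h) = ∫ x, T (u₁ x) (u₂ x) (h x) ∂μ := by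
  simp only [integralTrilinear, ContinuousLinearMap.coe_comp, Function.comp_apply,
    ContinuousLinearMap.postcomp_apply, ContinuousLinearMap.holderL_apply_apply,
    ContinuousLinearMap.lpPairing_eq_integral]
  refine integral_congr_ae ?_
  filter_upwards [T.coeFn_holder (r := 1) u₁ u₂, hh.coeFn_toLp] with x hT hh
  simp [hT, hh]

variable (μ p q)

theorem exists_norm_integral_trilinear_sub_le (T : E₁ →L[ℝ] E₂ →L[ℝ] F →L[ℝ] G) :
    ∃ A > 0, ∀ (u₁ u₁' : Lp E₁ p μ) (u₂ u₂' : Lp E₂ q μ) (h h' : α → F) (M : ℝ),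
      AEStronglyMeasurable h μ → AEStronglyMeasurable h' μ → 0 ≤ M →
      (∀ᵐ x ∂μ, ‖h x‖ ≤ M) → (∀ᵐ x ∂μ, ‖h' x‖ ≤ M) →
      ‖(∫ x, T (u₁ x) (u₂ x) (h x) ∂μ) - ∫ x, T (u₁' x) (u₂' x) (h' x) ∂μ‖ ≤
        A * (‖u₁ - u₁'‖ * ‖u₂‖ * M + ‖u₁'‖ * ‖u₂ - u₂'‖ * M +
          ‖u₁'‖ * ‖u₂'‖ * (eLpNorm (fun x => h x - h' x) ∞ μ).toReal) := by
  obtain ⟨A, hA, hΦ⟩ := (integralTrilinear μ p q T).exists_norm_apply₃_sub_apply₃_le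
  refine ⟨A, hA, fun u₁ u₁' u₂ u₂' h h' M hh hh' hM hhM hh'M => ?_⟩
  have hmem := memLp_top_of_bound hh M hhM
  have hmem' := memLp_top_of_bound hh' M hh'M
  have hnorm : ‖hmem.toLp h‖ ≤ M := by
    rw [Lp.norm_toLp]; exact toReal_eLpNorm_top_le_of_ae_bound hM hhM
  rw [← integralTrilinear_toLp T u₁ u₂ hmem, ← integralTrilinear_toLp T u₁' u₂' hmem']
  grw [hΦ, hnorm, ← MemLp.toLp_sub, Lp.norm_toLp]
  rfl

end

theorem multilinear_integral_function_perturbation_general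
    {Γ : Type*} [MeasurableSpace Γ] (μ : Measure Γ)
    {E₁ E₂ : Type*} [NormedAddCommGroup E₁] [NormedSpace ℝ E₁]
    [NormedAddCommGroup E₂] [NormedSpace ℝ E₂]
    {m N : ℕ} (T : E₁ →L[ℝ] E₂ →L[ℝ] (Fin m → ℝ) →L[ℝ] ℝ)
    (g : (Fin N → ℝ) → (Fin m → ℝ)) (hg : ContDiff ℝ 1 g) (K : ℝ) :
    ∃ C > 0, ∀ (u₁ u₁s : Lp E₁ 2 μ) (u₂ u₂s : Lp E₂ 2 μ) (v vs : Fin N → Γ → ℝ),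
      ‖u₁s‖ ≤ K * ‖u₁‖ → ‖u₂s‖ ≤ K * ‖u₂‖ →
      (∀ j, Measurable (v j)) → (∀ j, Measurable (vs j)) →
      (∀ j, ∀ᵐ x ∂μ, |v j x| ≤ K) → (∀ j, ∀ᵐ x ∂μ, |vs j x| ≤ K) →
      |(∫ x, T ((u₁ : Γ → E₁) x) ((u₂ : Γ → E₂) x) (g (fun j => v j x)) ∂μ) -
          ∫ x, T ((u₁s : Γ → E₁) x) ((u₂s : Γ → E₂) x) (g (fun j => vs j x)) ∂μ| ≤
        C * (‖u₁ - u₁s‖ * ‖u₂‖ + ‖u₂ - u₂s‖ * ‖u₁‖ +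
          ‖u₁‖ * ‖u₂‖ * ∑ j, (eLpNorm (v j - vs j) ⊤ μ).toReal) := by
  have hball := isCompact_closedBall (0 : Fin N → ℝ) |K|
  obtain ⟨M, hgM⟩ := hball.exists_bound_of_continuousOn hg.continuous.continuousOn
  obtain ⟨L, hgL⟩ := hg.contDiffOn.exists_lipschitzOnWith one_ne_zero (convex_closedBall _ _) hball
  obtain ⟨A, hA, hT⟩ := exists_norm_integral_trilinear_sub_le μ 2 2 T
  have hM : 0 ≤ M := (norm_nonneg _).trans (hgM 0 (Metric.mem_closedBall_self (abs_nonneg K)))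
  refine ⟨A * M + A * |K| * M + A * |K| ^ 2 * L + 1, by positivity, ?_⟩
  intro u₁ u₁s u₂ u₂s v vs hu₁ hu₂ hv hvs hvK hvsK
  have hw := ae_mem_closedBall_abs_of_abs_le hvK
  have hws := ae_mem_closedBall_abs_of_abs_le hvsK
  have hgw := hgL.toReal_eLpNorm_comp_sub_comp_le hw hws le_top fun j =>
    (memLp_top_of_bound (hv j).aestronglyMeasurable K (hvK j)).sub
      (memLp_top_of_bound (hvs j).aestronglyMeasurable K (hvsK j))
  have hu₁' : ‖u₁s‖ ≤ |K| * ‖u₁‖ := hu₁.trans (by gcongr; exact le_abs_self K)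
  have hu₂' : ‖u₂s‖ ≤ |K| * ‖u₂‖ := hu₂.trans (by gcongr; exact le_abs_self K)
  have hgv : ∀ v : Fin N → Γ → ℝ, (∀ j, Measurable (v j)) →
      AEStronglyMeasurable (fun x => g fun j => v j x) μ := fun v hv =>
    hg.continuous.comp_aestronglyMeasurable (measurable_pi_lambda _ hv).aestronglyMeasurable
  rw [← Real.norm_eq_abs]
  calc _ ≤ A * (‖u₁ - u₁s‖ * ‖u₂‖ * M + (|K| * ‖u₁‖) * ‖u₂ - u₂s‖ * M
          + (|K| * ‖u₁‖) * (|K| * ‖u₂‖) * (L * ∑ j, (eLpNorm (v j - vs j) ⊤ μ).toReal)) := by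
        grw [hT u₁ u₁s u₂ u₂s _ _ M (hgv v hv) (hgv vs hvs) hM (hw.mono fun x hx => hgM _ hx)
          (hws.mono fun x hx => hgM _ hx), hgw, hu₁', hu₂']
    _ ≤ _ := by
        rw [← sub_nonneg]
        ring_nf
        positivity

/-- **Function-perturbation stability of multilinear integral forms.**
For a bounded trilinear form `T`, a `C¹` function `g : ℝᴺ → ℝᵐ` and a constant `K > 0`,
there is `C > 0` such that for all `u₁, u₁* ∈ L²(μ; E₁)`, `u₂, u₂* ∈ L²(μ; E₂)` with
`‖u₁*‖ ≤ K‖u₁‖`, `‖u₂*‖ ≤ K‖u₂‖`, and all measurable `v₁, …, v_N, v₁*, …, v_N*` bounded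
a.e. by `K`, the difference of the integrals `∫ T(u₁, u₂, g∘v)` and `∫ T(u₁*, u₂*, g∘v*)`
is bounded by
`C (‖u₁ - u₁*‖₂ ‖u₂‖₂ + ‖u₂ - u₂*‖₂ ‖u₁‖₂ + ‖u₁‖₂ ‖u₂‖₂ ∑ⱼ ‖vⱼ - vⱼ*‖_∞)`. -/
theorem multilinear_integral_function_perturbation
    {Γ : Type*} [MeasurableSpace Γ] (μ : Measure Γ)
    {E₁ E₂ : Type*} [NormedAddCommGroup E₁] [NormedSpace ℝ E₁] [FiniteDimensional ℝ E₁]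
    [NormedAddCommGroup E₂] [NormedSpace ℝ E₂] [FiniteDimensional ℝ E₂]
    {m N : ℕ} (T : E₁ →L[ℝ] E₂ →L[ℝ] (Fin m → ℝ) →L[ℝ] ℝ)
    (g : (Fin N → ℝ) → (Fin m → ℝ)) (hg : ContDiff ℝ 1 g) (K : ℝ) (hK : 0 < K) :
    ∃ C > 0, ∀ (u₁ u₁s : Lp E₁ 2 μ) (u₂ u₂s : Lp E₂ 2 μ) (v vs : Fin N → Γ → ℝ),
      ‖u₁s‖ ≤ K * ‖u₁‖ → ‖u₂s‖ ≤ K * ‖u₂‖ →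
      (∀ j, Measurable (v j)) → (∀ j, Measurable (vs j)) →
      (∀ j, ∀ᵐ x ∂μ, |v j x| ≤ K) → (∀ j, ∀ᵐ x ∂μ, |vs j x| ≤ K) →
      |(∫ x, T ((u₁ : Γ → E₁) x) ((u₂ : Γ → E₂) x) (g (fun j => v j x)) ∂μ) -
          ∫ x, T ((u₁s : Γ → E₁) x) ((u₂s : Γ → E₂) x) (g (fun j => vs j x)) ∂μ| ≤
        C * (‖u₁ - u₁s‖ * ‖u₂‖ + ‖u₂ - u₂s‖ * ‖u₁‖ +
          ‖u₁‖ * ‖u₂‖ * ∑ j, (eLpNorm (v j - vs j) ⊤ μ).toReal) :=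
  multilinear_integral_function_perturbation_general μ T g hg K
end
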